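/- arXiv:1410.8740 — 2 statements merged into one kernel-verified Lean document; each statement's English description precedes it below -/
import Mathlib

section
/- With X1 = σ1 W Y1 and X2 = σ2 W Y2 as in the Two-component model, the unique copula C of (X1, X2) is given on (0,1)^2 by C(u1,u2) = u1 + u2 - 1 + ∫_0^∞ F_{G1}( w / ((1-u1)^{-1/α1} - 1) ) · F_{G2}( w / ((1-u2)^{-1/α2} - 1) ) e^{-w} dw, where Gi ~ Gamma(αi,1). -/
open MeasureTheory ProbabilityTheory Real Set

/-- The cdf of the gamma distribution (removed from Mathlib; old definition restored). -/
noncomputable def ProbabilityTheory.gammaCDFReal (a r : ℝ) : StieltjesFunction ℝ :=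
  ProbabilityTheory.cdf (ProbabilityTheory.gammaMeasure a r)

/-- The Two-component copula with parameters `α1 α2` on `(0,1)²`. -/
noncomputable def twoComponentCopula (α1 α2 : ℝ) (u1 u2 : ℝ) : ℝ :=
  u1 + u2 - 1 + ∫ w in Ioi (0 : ℝ),
    ProbabilityTheory.gammaCDFReal α1 1 (w / ((1 - u1) ^ (-(1 / α1)) - 1)) *
      ProbabilityTheory.gammaCDFReal α2 1 (w / ((1 - u2) ^ (-(1 / α2)) - 1)) *
        Real.exp (-w)

/-!
Write `Gᵢ = Yᵢ⁻¹ ~ Γ(αᵢ, 1)` and `sᵢ = xᵢ / σᵢ`; almost surely `{xᵢ < Xᵢ} = {sᵢ Gᵢ < W}`.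
Integrating out `W` first, `P(s G < W) = E[exp (-s G)] = (1 + s) ^ (-α)` (the Laplace transform
of the gamma law), so the marginals are `uᵢ = 1 - (1 + sᵢ) ^ (-αᵢ)`, i.e.
`sᵢ = (1 - uᵢ) ^ (-1/αᵢ) - 1`. Integrating out `(G₁, G₂)` first instead,
`P(x₁ < X₁, x₂ < X₂) = ∫₀^∞ F_{G₁}(w/s₁) F_{G₂}(w/s₂) e^{-w} dw`, and inclusion–exclusion
`H = u₁ + u₂ - 1 + P(x₁ < X₁, x₂ < X₂)` gives the formula.
-/

open scoped ENNReal
open Filter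

lemma lt_mul_mul_iff_div_mul_inv_lt {σ y x w : ℝ} (hσ : 0 < σ) (hy : 0 < y) :
    x < σ * w * y ↔ x / σ * y⁻¹ < w := by
  rw [← div_eq_mul_inv, div_div, div_lt_iff₀ (mul_pos hσ hy)]
  ring_nf

lemma one_sub_one_sub_rpow_neg_rpow_neg_one_div_sub_one {a s : ℝ} (ha : a ≠ 0) (hs : 0 ≤ 1 + s) :
    (1 - (1 - (1 + s) ^ (-a))) ^ (-(1 / a)) - 1 = s := by
  rw [sub_sub_cancel, one_div, ← inv_neg, rpow_rpow_inv hs (neg_ne_zero.2 ha), add_sub_cancel_left]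

namespace ProbabilityTheory

instance nullSingletonClass_gammaMeasure (a r : ℝ) : NullSingletonClass (gammaMeasure a r) := by
  unfold gammaMeasure; infer_instance

lemma measure_Ioi_eq_ofReal_one_sub_cdf (μ : Measure ℝ) [IsProbabilityMeasure μ] (t : ℝ) :
    μ (Ioi t) = ENNReal.ofReal (1 - cdf μ t) := by
  rw [← compl_Iic, prob_compl_eq_one_sub measurableSet_Iic, ← ofReal_cdf,
    ENNReal.ofReal_sub _ (cdf_nonneg μ t), ENNReal.ofReal_one]

lemma expMeasure_Ioi {r t : ℝ} (hr : 0 < r) (ht : 0 ≤ t) :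
    expMeasure r (Ioi t) = ENNReal.ofReal (exp (-(r * t))) := by
  have := isProbabilityMeasure_expMeasure hr
  rw [measure_Ioi_eq_ofReal_one_sub_cdf, cdf_expMeasure_eq hr, if_pos ht, sub_sub_cancel]

lemma gammaMeasure_Iio {a r : ℝ} (ha : 0 < a) (hr : 0 < r) (t : ℝ) :
    gammaMeasure a r (Iio t) = ENNReal.ofReal (cdf (gammaMeasure a r) t) := by
  have := isProbabilityMeasure_gammaMeasure ha hr
  rw [measure_congr Iio_ae_eq_Iic, ofReal_cdf]

lemma gammaMeasure_Iic_zero (a r : ℝ) : gammaMeasure a r (Iic 0) = 0 := by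
  rw [← measure_congr Iio_ae_eq_Iic, gammaMeasure, withDensity_apply _ measurableSet_Iio,
    lintegral_gammaPDF_of_nonpos le_rfl]

lemma ae_pos_gammaMeasure (a r : ℝ) : ∀ᵐ g ∂gammaMeasure a r, 0 < g := by
  rw [ae_iff]
  exact measure_mono_null (fun g hg => not_lt.mp hg) (gammaMeasure_Iic_zero a r)

lemma lintegral_expMeasure {r : ℝ} {f : ℝ → ℝ≥0∞} (hf : Measurable f) :
    ∫⁻ w, f w ∂expMeasure r = ∫⁻ w in Ioi 0, ENNReal.ofReal (r * exp (-(r * w))) * f w := by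
  have hpdf : Measurable (gammaPDF 1 r) := (measurable_gammaPDFReal 1 r).ennreal_ofReal
  rw [expMeasure, gammaMeasure, lintegral_withDensity_eq_lintegral_mul _ hpdf hf,
    ← setLIntegral_eq_of_support_subset (s := Ici 0), setLIntegral_congr Ioi_ae_eq_Ici.symm]
  · refine setLIntegral_congr_fun measurableSet_Ioi fun w hw => ?_
    simp [gammaPDF_of_nonneg (le_of_lt hw)]
  · intro w hw
    by_contra h
    exact hw (by simp [gammaPDF_of_neg (not_le.mp h)])

lemma lintegral_exp_neg_mul_gammaMeasure {a r s : ℝ} (ha : 0 < a) (hr : 0 < r) (hs : 0 < r + s) :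
    ∫⁻ g, ENNReal.ofReal (exp (-(s * g))) ∂gammaMeasure a r
      = ENNReal.ofReal (r ^ a * (r + s) ^ (-a)) := by
  have hpdf : ∀ b, Measurable (gammaPDF a b) := fun b =>
    (measurable_gammaPDFReal a b).ennreal_ofReal
  rw [gammaMeasure, lintegral_withDensity_eq_lintegral_mul _ (hpdf r) (by fun_prop)]
  have htilt : ∀ g, gammaPDF a r g * ENNReal.ofReal (exp (-(s * g)))
      = ENNReal.ofReal (r ^ a * (r + s) ^ (-a)) * gammaPDF a (r + s) g := by
    intro g
    rcases lt_or_ge g 0 with hg | hg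
    · simp [gammaPDF_of_neg hg]
    rw [gammaPDF_of_nonneg hg, gammaPDF_of_nonneg hg, ← ENNReal.ofReal_mul (by positivity),
      ← ENNReal.ofReal_mul (by positivity)]
    congr 1
    have hexp : exp (-(r * g)) * exp (-(s * g)) = exp (-((r + s) * g)) := by
      rw [← exp_add]; ring_nf
    have hpow : (r + s) ^ (-a) * (r + s) ^ a = 1 := by
      rw [← rpow_add hs]; simp
    linear_combination (r ^ a / Gamma a * g ^ (a - 1)) * hexp
      - (r ^ a / Gamma a * g ^ (a - 1) * exp (-((r + s) * g))) * hpow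
  simp only [Pi.mul_apply, htilt]
  rw [lintegral_const_mul _ (hpdf _), lintegral_gammaPDF_eq_one ha hs, mul_one]

lemma expMeasure_prod_gammaMeasure_mul_lt {a s : ℝ} (ha : 0 < a) (hs : 0 ≤ s) :
    ((expMeasure 1).prod (gammaMeasure a 1)) {p | s * p.2 < p.1}
      = ENNReal.ofReal ((1 + s) ^ (-a)) := by
  have := isProbabilityMeasure_expMeasure one_pos
  have := isProbabilityMeasure_gammaMeasure ha one_pos
  rw [Measure.prod_apply_symm (measurableSet_lt (by fun_prop) (by fun_prop))]
  calc ∫⁻ g, expMeasure 1 ((fun w => (w, g)) ⁻¹' {p | s * p.2 < p.1}) ∂gammaMeasure a 1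
      = ∫⁻ g, ENNReal.ofReal (exp (-(s * g))) ∂gammaMeasure a 1 := by
        refine lintegral_congr_ae ?_
        filter_upwards [ae_pos_gammaMeasure a 1] with g hg
        change expMeasure 1 (Ioi (s * g)) = _
        rw [expMeasure_Ioi one_pos (by positivity), one_mul]
    _ = ENNReal.ofReal ((1 + s) ^ (-a)) := by
        rw [lintegral_exp_neg_mul_gammaMeasure ha one_pos (by positivity), one_rpow, one_mul]

lemma measureReal_expMeasure_prod_gammaMeasure_prod {a₁ a₂ s₁ s₂ : ℝ} (ha₁ : 0 < a₁)
    (ha₂ : 0 < a₂) (hs₁ : 0 < s₁) (hs₂ : 0 < s₂) :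
    ((expMeasure 1).prod ((gammaMeasure a₁ 1).prod (gammaMeasure a₂ 1))).real
        {p | s₁ * p.2.1 < p.1 ∧ s₂ * p.2.2 < p.1}
      = ∫ w in Ioi 0, gammaCDFReal a₁ 1 (w / s₁) * gammaCDFReal a₂ 1 (w / s₂) * exp (-w) := by
  have := isProbabilityMeasure_gammaMeasure ha₁ one_pos
  have := isProbabilityMeasure_gammaMeasure ha₂ one_pos
  have hS : MeasurableSet {p : ℝ × ℝ × ℝ | s₁ * p.2.1 < p.1 ∧ s₂ * p.2.2 < p.1} := by
    measurability
  have hslice : ∀ w, Prod.mk w ⁻¹' {p : ℝ × ℝ × ℝ | s₁ * p.2.1 < p.1 ∧ s₂ * p.2.2 < p.1}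
      = Iio (w / s₁) ×ˢ Iio (w / s₂) := by
    intro w
    ext g
    simp [lt_div_iff₀ hs₁, lt_div_iff₀ hs₂, mul_comm]
  have hF₁ : Measurable (gammaCDFReal a₁ 1) := (gammaCDFReal a₁ 1).mono.measurable
  have hF₂ : Measurable (gammaCDFReal a₂ 1) := (gammaCDFReal a₂ 1).mono.measurable
  have hnonneg : ∀ w, 0 ≤ gammaCDFReal a₁ 1 (w / s₁) * gammaCDFReal a₂ 1 (w / s₂) * exp (-w) :=
    fun w => mul_nonneg (mul_nonneg (cdf_nonneg _ _) (cdf_nonneg _ _)) (exp_pos _).le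
  rw [integral_eq_lintegral_of_nonneg_ae (ae_of_all _ hnonneg) (by fun_prop),
    measureReal_def, Measure.prod_apply hS,
    lintegral_expMeasure (measurable_measure_prodMk_left hS)]
  congr 1
  refine setLIntegral_congr_fun measurableSet_Ioi fun w _ => ?_
  rw [hslice, Measure.prod_prod, gammaMeasure_Iio ha₁ one_pos, gammaMeasure_Iio ha₂ one_pos,
    ← ENNReal.ofReal_mul (cdf_nonneg _ _), ← ENNReal.ofReal_mul (by positivity), one_mul, one_mul,
    mul_comm, gammaCDFReal, gammaCDFReal]

lemma probReal_inter_eq_add_sub_one_add_probReal_compl_inter {α : Type*} [MeasurableSpace α]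
    {μ : Measure α} [IsProbabilityMeasure μ] {s t : Set α} (hs : MeasurableSet s)
    (ht : MeasurableSet t) : μ.real (s ∩ t) = μ.real s + μ.real t - 1 + μ.real (sᶜ ∩ tᶜ) := by
  have hunion := measureReal_union_add_inter (μ := μ) (s := s) ht
  rw [← compl_union, probReal_compl_eq_one_sub (hs.union ht)]
  linarith

section Model

variable {Ω : Type*} [MeasureSpace Ω]

lemma ae_pos_of_map_inv_eq_gammaMeasure {Y : Ω → ℝ} (hY : Measurable Y) {a r : ℝ}
    (hlaw : Measure.map (fun ω => (Y ω)⁻¹) ℙ = gammaMeasure a r) : ∀ᵐ ω, 0 < Y ω := by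
  filter_upwards [ae_of_ae_map hY.inv.aemeasurable (hlaw ▸ ae_pos_gammaMeasure a r)]
    with ω hω using inv_pos.mp hω

variable [IsProbabilityMeasure (ℙ : Measure Ω)]

lemma measureReal_mul_mul_le {W Y : Ω → ℝ} (hW : Measurable W)
    (hWlaw : Measure.map W ℙ = expMeasure 1) (hY : Measurable Y) (hWY : IndepFun W Y) {a : ℝ}
    (ha : 0 < a) (hYlaw : Measure.map (fun ω => (Y ω)⁻¹) ℙ = gammaMeasure a 1) {σ x : ℝ}
    (hσ : 0 < σ) (hx : 0 ≤ x) :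
    (ℙ).real {ω | σ * W ω * Y ω ≤ x} = 1 - (1 + x / σ) ^ (-a) := by
  have hlaw : Measure.map (fun ω => (W ω, (Y ω)⁻¹)) ℙ = (expMeasure 1).prod (gammaMeasure a 1) := by
    rw [← hWlaw, ← hYlaw]
    exact (hWY.comp measurable_id measurable_inv).map_prod_eq_prod_map_map hW.aemeasurable
      hY.inv.aemeasurable
  have htail : ({ω | σ * W ω * Y ω ≤ x}ᶜ : Set Ω)
      =ᵐ[ℙ] (fun ω => (W ω, (Y ω)⁻¹)) ⁻¹' {p | x / σ * p.2 < p.1} := by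
    refine eventuallyEq_set.2 ?_
    filter_upwards [ae_pos_of_map_inv_eq_gammaMeasure hY hYlaw] with ω hω
    exact not_le.trans (lt_mul_mul_iff_div_mul_inv_lt hσ hω)
  have hcompl := probReal_compl_eq_one_sub (μ := ℙ)
    (measurableSet_le (by fun_prop) measurable_const : MeasurableSet {ω | σ * W ω * Y ω ≤ x})
  rw [measureReal_congr htail,
    ← map_measureReal_apply (by fun_prop) (measurableSet_lt (by fun_prop) (by fun_prop)), hlaw,
    measureReal_def, expMeasure_prod_gammaMeasure_mul_lt ha (by positivity),
    ENNReal.toReal_ofReal (by positivity)] at hcompl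
  linarith

lemma measureReal_lt_mul_mul_and_lt_mul_mul {W Y₁ Y₂ : Ω → ℝ} (hW : Measurable W)
    (hWlaw : Measure.map W ℙ = expMeasure 1) (hY₁ : Measurable Y₁)
    (hY₂ : Measurable Y₂) (hWY : IndepFun W fun ω => (Y₁ ω, Y₂ ω)) (hY : IndepFun Y₁ Y₂)
    {a₁ a₂ : ℝ} (ha₁ : 0 < a₁) (ha₂ : 0 < a₂)
    (hY₁law : Measure.map (fun ω => (Y₁ ω)⁻¹) ℙ = gammaMeasure a₁ 1)
    (hY₂law : Measure.map (fun ω => (Y₂ ω)⁻¹) ℙ = gammaMeasure a₂ 1)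
    {σ₁ σ₂ x₁ x₂ : ℝ} (hσ₁ : 0 < σ₁) (hσ₂ : 0 < σ₂) (hx₁ : 0 < x₁) (hx₂ : 0 < x₂) :
    (ℙ).real {ω | x₁ < σ₁ * W ω * Y₁ ω ∧ x₂ < σ₂ * W ω * Y₂ ω}
      = ∫ w in Ioi 0, gammaCDFReal a₁ 1 (w / (x₁ / σ₁)) * gammaCDFReal a₂ 1 (w / (x₂ / σ₂)) *
          exp (-w) := by
  have hlawY : Measure.map (fun ω => ((Y₁ ω)⁻¹, (Y₂ ω)⁻¹)) ℙ
      = (gammaMeasure a₁ 1).prod (gammaMeasure a₂ 1) := by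
    rw [← hY₁law, ← hY₂law]
    exact (hY.comp measurable_inv measurable_inv).map_prod_eq_prod_map_map hY₁.inv.aemeasurable
      hY₂.inv.aemeasurable
  have hlaw : Measure.map (fun ω => (W ω, ((Y₁ ω)⁻¹, (Y₂ ω)⁻¹))) ℙ
      = (expMeasure 1).prod ((gammaMeasure a₁ 1).prod (gammaMeasure a₂ 1)) := by
    rw [← hWlaw, ← hlawY]
    exact (hWY.comp measurable_id (measurable_inv.prodMap measurable_inv)).map_prod_eq_prod_map_map
      hW.aemeasurable (hY₁.inv.prodMk hY₂.inv).aemeasurable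
  have hevent : {ω | x₁ < σ₁ * W ω * Y₁ ω ∧ x₂ < σ₂ * W ω * Y₂ ω}
      =ᵐ[ℙ] (fun ω => (W ω, ((Y₁ ω)⁻¹, (Y₂ ω)⁻¹))) ⁻¹'
        {p | x₁ / σ₁ * p.2.1 < p.1 ∧ x₂ / σ₂ * p.2.2 < p.1} := by
    refine eventuallyEq_set.2 ?_
    filter_upwards [ae_pos_of_map_inv_eq_gammaMeasure hY₁ hY₁law,
      ae_pos_of_map_inv_eq_gammaMeasure hY₂ hY₂law] with ω hω₁ hω₂
    exact and_congr (lt_mul_mul_iff_div_mul_inv_lt hσ₁ hω₁) (lt_mul_mul_iff_div_mul_inv_lt hσ₂ hω₂)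
  rw [measureReal_congr hevent, ← map_measureReal_apply (by fun_prop) (by measurability), hlaw,
    measureReal_expMeasure_prod_gammaMeasure_prod ha₁ ha₂ (by positivity) (by positivity)]

end Model

end ProbabilityTheory

/-- Sklar identity for the Two-component model: the (unique) copula `C` of
`(X1, X2) = (σ1 W Y1, σ2 W Y2)` is the Two-component copula: for `x1, x2 > 0`
(where the marginal cdfs take values in `(0,1)`),
`H(x1,x2) = C(F_{X1}(x1), F_{X2}(x2))` with `C = twoComponentCopula α1 α2`. -/
theorem two_component_copula_sklar
    {Ω : Type*} [MeasureSpace Ω] [IsProbabilityMeasure (ℙ : Measure Ω)]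
    (W Y1 Y2 : Ω → ℝ) (hWmeas : Measurable W)
    (hY1meas : Measurable Y1) (hY2meas : Measurable Y2)
    (hindep : iIndepFun ![W, Y1, Y2])
    (hW : Measure.map W ℙ = expMeasure 1)
    {α1 α2 : ℝ} (hα1 : 0 < α1) (hα2 : 0 < α2)
    (hY1 : Measure.map (fun ω => (Y1 ω)⁻¹) ℙ = gammaMeasure α1 1)
    (hY2 : Measure.map (fun ω => (Y2 ω)⁻¹) ℙ = gammaMeasure α2 1)
    {σ1 σ2 : ℝ} (hσ1 : 0 < σ1) (hσ2 : 0 < σ2) :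
    ∀ x1 x2 : ℝ, 0 < x1 → 0 < x2 →
      (ℙ {ω | σ1 * W ω * Y1 ω ≤ x1 ∧ σ2 * W ω * Y2 ω ≤ x2}).toReal
        = twoComponentCopula α1 α2
            (ℙ {ω | σ1 * W ω * Y1 ω ≤ x1}).toReal
            (ℙ {ω | σ2 * W ω * Y2 ω ≤ x2}).toReal := by
  intro x1 x2 hx1 hx2
  have hmeas : ∀ i, Measurable (![W, Y1, Y2] i) := fun i => by fin_cases i <;> assumption
  have hWY : IndepFun W fun ω => (Y1 ω, Y2 ω) := by
    simpa using (hindep.indepFun_prodMk hmeas 1 2 0 (by decide) (by decide)).symm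
  have hY : IndepFun Y1 Y2 := by simpa using hindep.indepFun (show (1 : Fin 3) ≠ 2 by decide)
  have hcompl : {ω | σ1 * W ω * Y1 ω ≤ x1}ᶜ ∩ {ω | σ2 * W ω * Y2 ω ≤ x2}ᶜ
      = {ω | x1 < σ1 * W ω * Y1 ω ∧ x2 < σ2 * W ω * Y2 ω} := by
    ext; simp [not_le]
  simp only [← measureReal_def]
  rw [ofPred_and, probReal_inter_eq_add_sub_one_add_probReal_compl_inter
      (measurableSet_le (by fun_prop) measurable_const)
      (measurableSet_le (by fun_prop) measurable_const), hcompl,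
    measureReal_lt_mul_mul_and_lt_mul_mul hWmeas hW hY1meas hY2meas hWY hY hα1 hα2 hY1 hY2
      hσ1 hσ2 hx1 hx2,
    measureReal_mul_mul_le hWmeas hW hY1meas (hWY.comp measurable_id measurable_fst) hα1 hY1 hσ1
      hx1.le,
    measureReal_mul_mul_le hWmeas hW hY2meas (hWY.comp measurable_id measurable_snd) hα2 hY2 hσ2
      hx2.le,
    twoComponentCopula, one_sub_one_sub_rpow_neg_rpow_neg_one_div_sub_one hα1.ne' (by positivity),
    one_sub_one_sub_rpow_neg_rpow_neg_one_div_sub_one hα2.ne' (by positivity)]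
end

section
/- Let φ: [0,1] → [0,∞] be continuous, strictly decreasing, convex with φ(1) = 0, and let φ^{[-1]} be its pseudo-inverse. Then C(u,v) = φ^{[-1]}(φ(u) + φ(v)) is a copula (grounded, 2-increasing, with uniform margins). -/
/-!
The pseudo-inverse `ψ` of a convex, strictly decreasing generator `φ` is itself convex and
decreasing: `ψ` lies below every chord because `φ` lies below every chord and reverses order.
For a convex function the map `(s, t) ↦ ψ (s + t)` is supermodular: with `p ≤ r ≤ q`, the points
`r` and `p + q - r` are convex combinations of `p` and `q` with swapped weights, so
`ψ r + ψ (p + q - r) ≤ ψ p + ψ q`. Taking `s, t` among the values of `φ` gives the 2-increasing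
property (the cases where `φ = ∞` follow from monotonicity alone); the margins come from
`ψ ∘ φ = id` and `φ 1 = 0`, and groundedness from `ψ = 0` above `φ 0`.
-/

open Set ENNReal
open scoped NNReal

theorem ConvexOn.map_add_sub_le {𝕜 β : Type*} [Field 𝕜] [LinearOrder 𝕜] [IsStrictOrderedRing 𝕜]
    [AddCommGroup β] [PartialOrder β] [IsOrderedAddMonoid β] [Module 𝕜 β]
    {s : Set 𝕜} {f : 𝕜 → β} (hf : ConvexOn 𝕜 s f) {p q r : 𝕜} (hp : p ∈ s) (hq : q ∈ s)
    (hpr : p ≤ r) (hrq : r ≤ q) : f r + f (p + q - r) ≤ f p + f q := by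
  obtain rfl | hpq := (hpr.trans hrq).eq_or_lt
  · obtain rfl := le_antisymm hrq hpr
    simp
  have hqp : q - p ≠ 0 := (sub_pos.2 hpq).ne'
  set a := (q - r) / (q - p)
  set b := (r - p) / (q - p)
  have ha : 0 ≤ a := div_nonneg (sub_nonneg.2 hrq) (sub_pos.2 hpq).le
  have hb : 0 ≤ b := div_nonneg (sub_nonneg.2 hpr) (sub_pos.2 hpq).le
  have hab : a + b = 1 := by simp only [a, b]; field_simp; ring
  have hr : a • p + b • q = r := by simp only [smul_eq_mul, a, b]; field_simp; ring
  have hs : b • p + a • q = p + q - r := by simp only [smul_eq_mul, a, b]; field_simp; ring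
  calc f r + f (p + q - r) = f (a • p + b • q) + f (b • p + a • q) := by rw [hr, hs]
    _ ≤ (a • f p + b • f q) + (b • f p + a • f q) :=
        add_le_add (hf.2 hp hq ha hb hab) (hf.2 hp hq hb ha (by rw [add_comm, hab]))
    _ = (a + b) • f p + (a + b) • f q := by module
    _ = f p + f q := by rw [hab, one_smul, one_smul]

theorem Antitone.map_add_add_le_of_convexOn_comp_ofReal {g : ℝ≥0∞ → ℝ} (hg : Antitone g)
    (hconv : ConvexOn ℝ (Ici 0) (g ∘ ENNReal.ofReal)) {a b c d : ℝ≥0∞} (hba : b ≤ a)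
    (hdc : d ≤ c) : g (a + d) + g (b + c) ≤ g (b + d) + g (a + c) := by
  obtain rfl | ha := eq_or_ne a ⊤
  · simp only [top_add]
    linarith [hg (add_le_add le_rfl hdc : b + d ≤ b + c)]
  obtain rfl | hc := eq_or_ne c ⊤
  · simp only [add_top]
    linarith [hg (add_le_add hba le_rfl : b + d ≤ a + d)]
  lift a to ℝ≥0 using ha
  lift c to ℝ≥0 using hc
  lift b to ℝ≥0 using ne_top_of_le_ne_top coe_ne_top hba
  lift d to ℝ≥0 using ne_top_of_le_ne_top coe_ne_top hdc
  rw [coe_le_coe] at hba hdc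
  have key := hconv.map_add_sub_le (p := b + d) (q := a + c) (r := a + d)
    (mem_Ici.2 (by positivity)) (mem_Ici.2 (by positivity)) (by gcongr) (by gcongr)
  rw [show ((b:ℝ) + d + (a + c) - (a + d)) = b + c by ring] at key
  simpa [← ENNReal.coe_add, ← NNReal.coe_add] using key

structure IsPseudoInverse (φ : ℝ → ℝ≥0∞) (ψ : ℝ≥0∞ → ℝ) : Prop where
  inv : ∀ t, t ≤ φ 0 → ψ t ∈ Icc (0:ℝ) 1 ∧ φ (ψ t) = t
  eq_zero : ∀ t, φ 0 ≤ t → ψ t = 0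

namespace IsPseudoInverse

variable {φ : ℝ → ℝ≥0∞} {ψ : ℝ≥0∞ → ℝ}

theorem mem_Icc (h : IsPseudoInverse φ ψ) (t : ℝ≥0∞) : ψ t ∈ Icc (0:ℝ) 1 := by
  rcases le_total t (φ 0) with ht | ht
  · exact (h.inv t ht).1
  · rw [h.eq_zero t ht]
    exact left_mem_Icc.2 zero_le_one

theorem apply_le (h : IsPseudoInverse φ ψ) (t : ℝ≥0∞) : φ (ψ t) ≤ t := by
  rcases le_total t (φ 0) with ht | ht
  · exact (h.inv t ht).2.le
  · rwa [h.eq_zero t ht]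

variable (hanti : StrictAntiOn φ (Icc 0 1))
include hanti

theorem leftInvOn (h : IsPseudoInverse φ ψ) : LeftInvOn ψ φ (Icc 0 1) := fun _ hx =>
  have hφx := hanti.antitoneOn (left_mem_Icc.2 zero_le_one) hx hx.1
  hanti.injOn (h.inv _ hφx).1 hx (h.inv _ hφx).2

theorem antitone (h : IsPseudoInverse φ ψ) : Antitone ψ := by
  intro s t hst
  rcases le_total (φ 0) t with ht | ht
  · rw [h.eq_zero t ht]
    exact (h.mem_Icc s).1
  · by_contra! hlt
    have hts := hanti (h.mem_Icc s) (h.mem_Icc t) hlt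
    rw [(h.inv t ht).2, (h.inv s (hst.trans ht)).2] at hts
    exact hts.not_ge hst

theorem convexOn_comp_ofReal (h : IsPseudoInverse φ ψ)
    (hconv : ∀ x ∈ Icc (0:ℝ) 1, ∀ y ∈ Icc (0:ℝ) 1, ∀ t ∈ Icc (0:ℝ) 1,
      φ (t * x + (1 - t) * y) ≤ ENNReal.ofReal t * φ x + ENNReal.ofReal (1 - t) * φ y) :
    ConvexOn ℝ (Ici 0) (ψ ∘ ENNReal.ofReal) := by
  refine ⟨convex_Ici 0, fun x hx y hy a b ha hb hab => ?_⟩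
  have hb' : 1 - a = b := by linarith
  set m := a * ψ (ENNReal.ofReal x) + b * ψ (ENNReal.ofReal y)
  have hm : m ∈ Icc (0:ℝ) 1 := convex_Icc 0 1 (h.mem_Icc _) (h.mem_Icc _) ha hb hab
  have hφm : φ m ≤ ENNReal.ofReal (a * x + b * y) := calc
    φ m ≤ ENNReal.ofReal a * φ (ψ (ENNReal.ofReal x))
        + ENNReal.ofReal b * φ (ψ (ENNReal.ofReal y)) := by
        simpa only [hb'] using hconv _ (h.mem_Icc _) _ (h.mem_Icc _) a ⟨ha, by linarith⟩
    _ ≤ ENNReal.ofReal a * ENNReal.ofReal x + ENNReal.ofReal b * ENNReal.ofReal y := by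
        gcongr <;> exact h.apply_le _
    _ = ENNReal.ofReal (a * x + b * y) := by
        rw [ENNReal.ofReal_add (mul_nonneg ha hx) (mul_nonneg hb hy), ENNReal.ofReal_mul ha,
          ENNReal.ofReal_mul hb]
  calc ψ (ENNReal.ofReal (a • x + b • y)) ≤ ψ (φ m) := h.antitone hanti hφm
    _ = m := h.leftInvOn hanti hm

end IsPseudoInverse

theorem archimedean_generator_gives_copula_general
    (φ : ℝ → ℝ≥0∞) (ψ : ℝ≥0∞ → ℝ)
    (hanti : StrictAntiOn φ (Icc (0:ℝ) 1))
    (hφ1 : φ 1 = 0)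
    -- convexity of `φ` on `[0,1]`
    (hconv : ∀ x ∈ Icc (0:ℝ) 1, ∀ y ∈ Icc (0:ℝ) 1, ∀ t ∈ Icc (0:ℝ) 1,
      φ (t * x + (1 - t) * y) ≤ ENNReal.ofReal t * φ x + ENNReal.ofReal (1 - t) * φ y)
    -- `ψ` is the pseudo-inverse of `φ`
    (hψ_inv : ∀ t : ℝ≥0∞, t ≤ φ 0 → ψ t ∈ Icc (0:ℝ) 1 ∧ φ (ψ t) = t)
    (hψ_top : ∀ t : ℝ≥0∞, φ 0 ≤ t → ψ t = 0) :
    let C : ℝ → ℝ → ℝ := fun u v => ψ (φ u + φ v)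
    (∀ u ∈ Icc (0:ℝ) 1, C u 0 = 0 ∧ C 0 u = 0) ∧
    (∀ u ∈ Icc (0:ℝ) 1, C u 1 = u ∧ C 1 u = u) ∧
    (∀ x1 ∈ Icc (0:ℝ) 1, ∀ y1 ∈ Icc (0:ℝ) 1, ∀ x2 ∈ Icc (0:ℝ) 1, ∀ y2 ∈ Icc (0:ℝ) 1,
      x1 ≤ y1 → x2 ≤ y2 → 0 ≤ C y1 y2 - C y1 x2 - C x1 y2 + C x1 x2) := by
  have hψ : IsPseudoInverse φ ψ := ⟨hψ_inv, hψ_top⟩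
  intro C
  refine ⟨fun u _ => ⟨hψ_top _ le_add_self, hψ_top _ le_self_add⟩,
    fun u hu => ⟨?_, ?_⟩, fun x1 hx1 y1 hy1 x2 hx2 y2 hy2 h1 h2 => ?_⟩
  · simpa only [C, hφ1, add_zero] using hψ.leftInvOn hanti hu
  · simpa only [C, hφ1, zero_add] using hψ.leftInvOn hanti hu
  · have := (hψ.antitone hanti).map_add_add_le_of_convexOn_comp_ofReal
      (hψ.convexOn_comp_ofReal hanti hconv) (hanti.antitoneOn hx1 hy1 h1)
      (hanti.antitoneOn hx2 hy2 h2)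
    simp only [C]
    linarith

/-- Archimedean copulas: if `φ : [0,1] → [0,∞]` is continuous, strictly decreasing and
convex with `φ(1) = 0`, and `ψ` is its pseudo-inverse, then
`C(u,v) = ψ(φ(u) + φ(v))` is a copula: grounded, 2-increasing, with uniform margins. -/
theorem archimedean_generator_gives_copula
    (φ : ℝ → ℝ≥0∞) (ψ : ℝ≥0∞ → ℝ)
    (hcont : ContinuousOn φ (Icc (0:ℝ) 1))
    (hanti : StrictAntiOn φ (Icc (0:ℝ) 1))
    (hφ1 : φ 1 = 0)
    -- convexity of `φ` on `[0,1]`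
    (hconv : ∀ x ∈ Icc (0:ℝ) 1, ∀ y ∈ Icc (0:ℝ) 1, ∀ t ∈ Icc (0:ℝ) 1,
      φ (t * x + (1 - t) * y) ≤ ENNReal.ofReal t * φ x + ENNReal.ofReal (1 - t) * φ y)
    -- `ψ` is the pseudo-inverse of `φ`
    (hψ_inv : ∀ t : ℝ≥0∞, t ≤ φ 0 → ψ t ∈ Icc (0:ℝ) 1 ∧ φ (ψ t) = t)
    (hψ_top : ∀ t : ℝ≥0∞, φ 0 ≤ t → ψ t = 0) :
    let C : ℝ → ℝ → ℝ := fun u v => ψ (φ u + φ v)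
    (∀ u ∈ Icc (0:ℝ) 1, C u 0 = 0 ∧ C 0 u = 0) ∧
    (∀ u ∈ Icc (0:ℝ) 1, C u 1 = u ∧ C 1 u = u) ∧
    (∀ x1 ∈ Icc (0:ℝ) 1, ∀ y1 ∈ Icc (0:ℝ) 1, ∀ x2 ∈ Icc (0:ℝ) 1, ∀ y2 ∈ Icc (0:ℝ) 1,
      x1 ≤ y1 → x2 ≤ y2 → 0 ≤ C y1 y2 - C y1 x2 - C x1 y2 + C x1 x2) :=
  archimedean_generator_gives_copula_general φ ψ hanti hφ1 hconv hψ_inv hψ_top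
end
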